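/- Let k be a field, d a natural number, and m_0, m_1, m_2, m_3 natural numbers with m_i ≤ d for all i and 2d ≥ m_i + m_j + m_l for every three-element subset {i,j,l} ⊆ {0,1,2,3}. Set k' = 2d − (m_0 + m_1 + m_2 + m_3) (an integer, possibly negative); then d + k' ≥ 0 and m_i + k' ≥ 0 for all i. The map sending a homogeneous polynomial f of degree d to f(x_1x_2x_3, x_0x_2x_3, x_0x_1x_3, x_0x_1x_2) / (x_0^{m_0} x_1^{m_1} x_2^{m_2} x_3^{m_3}) is a k-linear bijection from the vector space of homogeneous polynomials of degree d in k[x_0,x_1,x_2,x_3] having multiplicity at least m_i at the coordinate point e_i for each i, onto the vector space of homogeneous polynomials of degree d + k' having multiplicity at least m_i + k' at e_i for each i. In particular these two vector spaces have the same dimension. -/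

import Mathlib

/-!
In degree `d` the substitution `x_i ↦ ∏_{j ≠ i} x_j` sends the monomial `x^a` to
`∏_j x_j^(d - a_j)`, so after division by `x^m` it acts on monomials by the exponent map
`a ↦ (d - m_j - a_j)_j`. The multiplicity conditions `a_j + m_j ≤ d` say that no subtraction
truncates, and on this box the exponent map is an involution. It carries the exponents of the
first linear system onto those of the second because `d + d' + ∑ m = 4d` and
`m'_j - m_j = d' - d = k'`. A bijection between monomial bases induces the linear bijection.
-/

open MvPolynomial

/-- The `k`-subspace of `MvPolynomial σ k` of polynomials whose support is contained
in a given set `S` of exponents. -/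
def suppSubmodule (k : Type*) [Field k] (σ : Type*) [DecidableEq σ] (S : Set (σ →₀ ℕ)) :
    Submodule k (MvPolynomial σ k) where
  carrier := {f | ∀ a ∈ f.support, a ∈ S}
  zero_mem' := by intro a ha; simp at ha
  add_mem' := by
    intro f g hf hg a ha
    rcases Finset.mem_union.mp (MvPolynomial.support_add ha) with h | h
    · exact hf a h
    · exact hg a h
  smul_mem' := by
    intro c f hf a ha
    exact hf a (MvPolynomial.support_smul ha)

/-- The vector space of homogeneous polynomials of degree `d` in `k[x_0,…,x_3]` having
multiplicity at least `m i` at the `i`-th coordinate point `e_i`, i.e. every exponent `a`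
occurring in the polynomial satisfies `∑ a i = d` and `d - a i ≥ m i`. -/
def linSys (k : Type*) [Field k] (d : ℕ) (m : Fin 4 → ℕ) :
    Submodule k (MvPolynomial (Fin 4) k) :=
  suppSubmodule k (Fin 4) {a | (∑ i, a i) = d ∧ ∀ i, a i + m i ≤ d}

section SuppSubmodule

variable {k : Type*} [Field k] {σ : Type*} [DecidableEq σ] {S T : Set (σ →₀ ℕ)}

lemma mapDomain_mem_suppSubmodule {φ : (σ →₀ ℕ) → (σ →₀ ℕ)} (hφ : Set.MapsTo φ S T)
    {f : MvPolynomial σ k} (hf : f ∈ suppSubmodule k σ S) :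
    AddMonoidAlgebra.mapDomainLinearMap k k φ f ∈ suppSubmodule k σ T := by
  intro b hb
  obtain ⟨a, ha, rfl⟩ := Finset.mem_image.mp (Finsupp.mapDomain_support (f := φ) hb)
  exact hφ (hf a ha)

lemma mapDomain_mapDomain_of_leftInvOn {φ ψ : (σ →₀ ℕ) → (σ →₀ ℕ)} (h : Set.LeftInvOn ψ φ S)
    {f : MvPolynomial σ k} (hf : f ∈ suppSubmodule k σ S) :
    AddMonoidAlgebra.mapDomainLinearMap k k ψ
      (AddMonoidAlgebra.mapDomainLinearMap k k φ f) = f := by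
  apply AddMonoidAlgebra.coeff_injective
  simp only [AddMonoidAlgebra.coeff_mapDomainLinearMap, ← Finsupp.mapDomain_comp]
  exact (Finsupp.mapDomain_congr fun a ha => h (hf a ha)).trans Finsupp.mapDomain_id

variable (k) in
noncomputable def suppSubmoduleEquiv (φ ψ : (σ →₀ ℕ) → (σ →₀ ℕ)) (hφ : Set.MapsTo φ S T)
    (hψ : Set.MapsTo ψ T S) (hinv : Set.InvOn ψ φ S T) :
    suppSubmodule k σ S ≃ₗ[k] suppSubmodule k σ T :=
  LinearEquiv.ofLinearMap
    ((AddMonoidAlgebra.mapDomainLinearMap k k φ).restrict fun _ => mapDomain_mem_suppSubmodule hφ)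
    ((AddMonoidAlgebra.mapDomainLinearMap k k ψ).restrict fun _ => mapDomain_mem_suppSubmodule hψ)
    (LinearMap.ext fun f => Subtype.ext (mapDomain_mapDomain_of_leftInvOn hinv.2 f.2))
    (LinearMap.ext fun f => Subtype.ext (mapDomain_mapDomain_of_leftInvOn hinv.1 f.2))

end SuppSubmodule

section Cremona

variable {σ : Type*} [Fintype σ]

def linSysExponents (d : ℕ) (m : σ → ℕ) : Set (σ →₀ ℕ) :=
  {a | (∑ i, a i) = d ∧ ∀ i, a i + m i ≤ d}

/-- The Cremona transformation divided by `x^m` sends the monomial `x^a` of degree `d` to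
`(∏_j x_j^(d - a_j)) / x^m`; this is its exponent. -/
noncomputable def cremonaExponent (d : ℕ) (m : σ → ℕ) (a : σ →₀ ℕ) : σ →₀ ℕ :=
  Finsupp.equivFunOnFinite.symm fun j => d - m j - a j

@[simp]
lemma cremonaExponent_apply (d : ℕ) (m : σ → ℕ) (a : σ →₀ ℕ) (j : σ) :
    cremonaExponent d m a j = d - m j - a j :=
  rfl

lemma leftInvOn_cremonaExponent (d : ℕ) (m : σ → ℕ) :
    Set.LeftInvOn (cremonaExponent d m) (cremonaExponent d m) {a | ∀ i, a i + m i ≤ d} :=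
  fun a ha => Finsupp.ext fun j => by have := ha j; simp only [cremonaExponent_apply]; omega

lemma sum_cremonaExponent {d e : ℕ} {m : σ → ℕ} {a : σ →₀ ℕ} (ha : ∀ i, a i + m i ≤ d)
    (hsum : Fintype.card σ * d = (∑ i, a i) + e + ∑ i, m i) :
    ∑ i, cremonaExponent d m a i = e := by
  have key : ∑ i, (cremonaExponent d m a i + a i + m i) = Fintype.card σ * d := by
    rw [← smul_eq_mul, ← Finset.card_univ, ← Finset.sum_const]
    exact Finset.sum_congr rfl fun i _ => by have := ha i; simp only [cremonaExponent_apply]; omega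
  rw [Finset.sum_add_distrib, Finset.sum_add_distrib] at key
  omega

variable {d d' : ℕ} {m m' : σ → ℕ}

lemma mapsTo_cremonaExponent (hdeg : Fintype.card σ * d = d + d' + ∑ i, m i)
    (hmult : ∀ i, m i + d' = m' i + d) :
    Set.MapsTo (cremonaExponent d m) (linSysExponents d m) (linSysExponents d' m') := by
  rintro a ⟨ha, hle⟩
  refine ⟨sum_cremonaExponent hle (by rw [ha]; exact hdeg), fun i => ?_⟩
  have := hle i; have := hmult i
  simp only [cremonaExponent_apply]
  omega

lemma linSysExponents_subset (hmult : ∀ i, m i + d' = m' i + d) :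
    linSysExponents d' m' ⊆ {a | ∀ i, a i + m i ≤ d} := by
  rintro a ⟨-, hle⟩ i
  have := hle i; have := hmult i
  omega

lemma mapsTo_cremonaExponent_symm (hdeg : Fintype.card σ * d = d + d' + ∑ i, m i)
    (hmult : ∀ i, m i + d' = m' i + d) :
    Set.MapsTo (cremonaExponent d m) (linSysExponents d' m') (linSysExponents d m) := by
  intro a ha
  have hbox := linSysExponents_subset hmult ha
  refine ⟨sum_cremonaExponent hbox (by rw [ha.1]; omega), fun i => ?_⟩
  have := hbox i
  simp only [cremonaExponent_apply]
  omega

lemma invOn_cremonaExponent (hmult : ∀ i, m i + d' = m' i + d) :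
    Set.InvOn (cremonaExponent d m) (cremonaExponent d m)
      (linSysExponents d m) (linSysExponents d' m') :=
  ⟨(leftInvOn_cremonaExponent d m).mono fun _ ha => ha.2,
    (leftInvOn_cremonaExponent d m).mono (linSysExponents_subset hmult)⟩

end Cremona

section Polynomial

variable {R : Type*} [CommSemiring R] {σ : Type*} [Fintype σ] [DecidableEq σ]

lemma bind₁_prod_erase_monomial (a : σ →₀ ℕ) (c : R) :
    bind₁ (fun i => ∏ j ∈ Finset.univ.erase i, (X j : MvPolynomial σ R)) (monomial a c) =
      C c * ∏ j, X j ^ ∑ i ∈ Finset.univ.erase j, a i := by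
  rw [bind₁_monomial, Finset.prod_subset a.support.subset_univ fun i _ hi => by
    rw [Finsupp.notMem_support_iff.mp hi, pow_zero]]
  congr 1
  simp_rw [← Finset.prod_pow]
  rw [Finset.prod_comm' (t' := Finset.univ) (s' := fun j => Finset.univ.erase j) fun i j => by
    simp only [Finset.mem_erase, Finset.mem_univ, and_true, true_and, ne_comm]]
  simp_rw [Finset.prod_pow_eq_pow_sum]

lemma prod_X_pow_mul_monomial_cremonaExponent {d : ℕ} {m : σ → ℕ} {a : σ →₀ ℕ}
    (ha : a ∈ linSysExponents d m) (c : R) :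
    (∏ i, (X i : MvPolynomial σ R) ^ m i) * monomial (cremonaExponent d m a) c =
      bind₁ (fun i => ∏ j ∈ Finset.univ.erase i, X j) (monomial a c) := by
  have hsum_erase (j : σ) : ∑ i ∈ Finset.univ.erase j, a i = d - a j := by
    have := Finset.add_sum_erase Finset.univ (fun i => a i) (Finset.mem_univ j)
    have := ha.1
    omega
  rw [bind₁_prod_erase_monomial, monomial_eq, Finsupp.prod_fintype _ _ fun i => pow_zero _,
    mul_left_comm, ← Finset.prod_mul_distrib]
  congr 1
  refine Finset.prod_congr rfl fun j _ => ?_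
  have := ha.2 j
  rw [← pow_add, cremonaExponent_apply, hsum_erase]
  congr 1
  omega

lemma prod_X_pow_mul_mapDomain_cremonaExponent {d : ℕ} {m : σ → ℕ} {f : MvPolynomial σ R}
    (hf : ∀ a ∈ f.support, a ∈ linSysExponents d m) :
    (∏ i, (X i : MvPolynomial σ R) ^ m i) *
        AddMonoidAlgebra.mapDomainLinearMap R R (cremonaExponent d m) f =
      bind₁ (fun i => ∏ j ∈ Finset.univ.erase i, X j) f := by
  conv_lhs => rw [f.as_sum]
  conv_rhs => rw [f.as_sum]
  rw [map_sum, map_sum, Finset.mul_sum]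
  refine Finset.sum_congr rfl fun a ha => ?_
  rw [← single_eq_monomial, AddMonoidAlgebra.mapDomainLinearMap_single, single_eq_monomial]
  exact prod_X_pow_mul_monomial_cremonaExponent (hf a ha) _

end Polynomial

lemma cremona_shift_nonneg {d : ℕ} {m : Fin 4 → ℕ}
    (h3 : ∀ i j l : Fin 4, i ≠ j → i ≠ l → j ≠ l → (m i : ℤ) + m j + m l ≤ 2 * d) :
    0 ≤ (d : ℤ) + (2 * d - ∑ i, (m i : ℤ)) ∧ ∀ i, 0 ≤ (m i : ℤ) + (2 * d - ∑ j, (m j : ℤ)) := by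
  have h012 := h3 0 1 2 (by decide) (by decide) (by decide)
  have h013 := h3 0 1 3 (by decide) (by decide) (by decide)
  have h023 := h3 0 2 3 (by decide) (by decide) (by decide)
  have h123 := h3 1 2 3 (by decide) (by decide) (by decide)
  rw [Fin.sum_univ_four]
  refine ⟨by omega, fun i => ?_⟩
  fin_cases i <;> simp only [Fin.zero_eta, Fin.mk_one, Fin.reduceFinMk, Fin.isValue] <;> omega

theorem cremona_linear_bijection_general
    (k : Type*) [Field k] (d : ℕ) (m : Fin 4 → ℕ)
    (h3 : ∀ i j l : Fin 4, i ≠ j → i ≠ l → j ≠ l →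
      (m i : ℤ) + m j + m l ≤ 2 * d) :
    0 ≤ (d : ℤ) + (2 * d - ∑ i, (m i : ℤ)) ∧
    (∀ i, 0 ≤ (m i : ℤ) + (2 * d - ∑ j, (m j : ℤ))) ∧
    ∃ e : linSys k d m ≃ₗ[k]
        linSys k ((d : ℤ) + (2 * d - ∑ i, (m i : ℤ))).toNat
          (fun i => ((m i : ℤ) + (2 * d - ∑ j, (m j : ℤ))).toNat),
      ∀ f : linSys k d m,
        (∏ i : Fin 4, (X i : MvPolynomial (Fin 4) k) ^ m i) * (e f : MvPolynomial (Fin 4) k) =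
          MvPolynomial.bind₁ (fun i : Fin 4 => ∏ j ∈ Finset.univ.erase i, X j)
            (f : MvPolynomial (Fin 4) k) := by
  obtain ⟨hd', hm'⟩ := cremona_shift_nonneg h3
  have hdeg : Fintype.card (Fin 4) * d =
      d + ((d : ℤ) + (2 * d - ∑ i, (m i : ℤ))).toNat + ∑ i, m i := by
    zify
    rw [Int.toNat_of_nonneg hd', Fintype.card_fin]
    ring
  have hmult (i : Fin 4) : m i + ((d : ℤ) + (2 * d - ∑ j, (m j : ℤ))).toNat =
      ((m i : ℤ) + (2 * d - ∑ j, (m j : ℤ))).toNat + d := by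
    zify
    rw [Int.toNat_of_nonneg hd', Int.toNat_of_nonneg (hm' i)]
    ring
  refine ⟨hd', hm', suppSubmoduleEquiv k _ _ (mapsTo_cremonaExponent hdeg hmult)
    (mapsTo_cremonaExponent_symm hdeg hmult) (invOn_cremonaExponent hmult), fun f => ?_⟩
  exact prod_X_pow_mul_mapDomain_cremonaExponent f.2

/-- The cubic Cremona transformation `x_i ↦ ∏_{j≠i} x_j`, followed by division by the
monomial `x_0^{m_0}⋯x_3^{m_3}`, is a `k`-linear bijection from the space of homogeneous
polynomials of degree `d` with multiplicity at least `m i` at `e_i` onto the space of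
homogeneous polynomials of degree `d + k'` with multiplicity at least `m i + k'` at `e_i`,
where `k' = 2d - ∑ m i`. -/
theorem cremona_linear_bijection
    (k : Type*) [Field k] (d : ℕ) (m : Fin 4 → ℕ)
    (hm : ∀ i, m i ≤ d)
    (h3 : ∀ i j l : Fin 4, i ≠ j → i ≠ l → j ≠ l →
      (m i : ℤ) + m j + m l ≤ 2 * d) :
    0 ≤ (d : ℤ) + (2 * d - ∑ i, (m i : ℤ)) ∧
    (∀ i, 0 ≤ (m i : ℤ) + (2 * d - ∑ j, (m j : ℤ))) ∧
    ∃ e : linSys k d m ≃ₗ[k]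
        linSys k ((d : ℤ) + (2 * d - ∑ i, (m i : ℤ))).toNat
          (fun i => ((m i : ℤ) + (2 * d - ∑ j, (m j : ℤ))).toNat),
      ∀ f : linSys k d m,
        (∏ i : Fin 4, (X i : MvPolynomial (Fin 4) k) ^ m i) * (e f : MvPolynomial (Fin 4) k) =
          MvPolynomial.bind₁ (fun i : Fin 4 => ∏ j ∈ Finset.univ.erase i, X j)
            (f : MvPolynomial (Fin 4) k) :=
  cremona_linear_bijection_general k d m h3
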